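/- Let u : ℝ × ℝ² → ℝ² be a C¹ time-dependent vector field, and let Q : ℝ × ℝ → ℝ² be C² and P : ℝ × ℝ → ℝ² be differentiable in t, satisfying ∂Q/∂t (t,s) = u(t, Q(t,s)) and ∂P/∂t (t,s) = −(D_x u(t, Q(t,s)))ᵀ P(t,s). If the momentum is initially normal to the curve, i.e. P(0,s) · ∂Q/∂s (0,s) = 0 for every s, then the momentum is normal to the curve for all times: P(t,s) · ∂Q/∂s (t,s) = 0 for all t and all s. -/

import Mathlib

open scoped RealInnerProductSpace

/-! The tangent vector `v = ∂Q/∂s` satisfies the linearised equation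
`∂v/∂t = D_x u(t, Q) v`: differentiate `∂Q/∂t = u(t, Q)` in `s` and swap the mixed
partials of the `C²` map `Q`. The momentum solves the adjoint equation
`∂P/∂t = -(D_x u)ᵀ P`, so
`∂/∂t ⟪P, v⟫ = -⟪(D_x u)ᵀ P, v⟫ + ⟪P, D_x u v⟫ = 0`,
and `⟪P, v⟫` keeps its initial value `0`. -/

section PartialDerivatives

variable {𝕜 : Type*} [NontriviallyNormedField 𝕜]
  {E : Type*} [NormedAddCommGroup E] [NormedSpace 𝕜 E]

theorem DifferentiableAt.hasDerivAt_partial_fst {f : 𝕜 × 𝕜 → E} {t s : 𝕜}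
    (hf : DifferentiableAt 𝕜 f (t, s)) :
    HasDerivAt (fun τ => f (τ, s)) (fderiv 𝕜 f (t, s) (1, 0)) t :=
  hf.hasFDerivAt.comp_hasDerivAt t ((hasDerivAt_id t).prodMk (hasDerivAt_const t s))

theorem DifferentiableAt.hasDerivAt_partial_snd {f : 𝕜 × 𝕜 → E} {t s : 𝕜}
    (hf : DifferentiableAt 𝕜 f (t, s)) :
    HasDerivAt (fun σ => f (t, σ)) (fderiv 𝕜 f (t, s) (0, 1)) s :=
  hf.hasFDerivAt.comp_hasDerivAt s ((hasDerivAt_const s t).prodMk (hasDerivAt_id s))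

end PartialDerivatives

section MixedPartials

variable {E : Type*} [NormedAddCommGroup E] [NormedSpace ℝ E]

theorem ContDiff.hasDerivAt_partial_comm {Q : ℝ × ℝ → E} (hQ : ContDiff ℝ 2 Q)
    {t s : ℝ} {w : E} (h : HasDerivAt (fun σ => deriv (fun τ => Q (τ, σ)) t) w s) :
    HasDerivAt (fun τ => deriv (fun σ => Q (τ, σ)) s) w t := by
  have hQd : Differentiable ℝ Q := hQ.differentiable (by norm_num)
  have hQ'd : Differentiable ℝ (fderiv ℝ Q) :=
    (hQ.fderiv_right (m := 1) le_rfl).differentiable (by norm_num)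
  set Q'' := fderiv ℝ (fderiv ℝ Q) (t, s)
  have h_ts : HasDerivAt (fun σ => deriv (fun τ => Q (τ, σ)) t) (Q'' (0, 1) (1, 0)) s := by
    simp only [fun σ => ((hQd (t, σ)).hasDerivAt_partial_fst).deriv]
    simpa using (hQ'd (t, s)).hasDerivAt_partial_snd.clm_apply
      (hasDerivAt_const s ((1 : ℝ), (0 : ℝ)))
  have h_st : HasDerivAt (fun τ => deriv (fun σ => Q (τ, σ)) s) (Q'' (1, 0) (0, 1)) t := by
    simp only [fun τ => ((hQd (τ, s)).hasDerivAt_partial_snd).deriv]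
    simpa using (hQ'd (t, s)).hasDerivAt_partial_fst.clm_apply
      (hasDerivAt_const t ((0 : ℝ), (1 : ℝ)))
  have h_symm : Q'' (1, 0) (0, 1) = Q'' (0, 1) (1, 0) :=
    hQ.contDiffAt.isSymmSndFDerivAt (by simp [minSmoothness_of_isRCLikeNormedField]) _ _
  rw [h.unique h_ts, ← h_symm]
  exact h_st

theorem hasDerivAt_partial_snd_of_flow {u : ℝ × E → E} {Q : ℝ × ℝ → E}
    (hQsmooth : ContDiff ℝ 2 Q) {t s : ℝ}
    (hQ : ∀ σ, HasDerivAt (fun τ => Q (τ, σ)) (u (t, Q (t, σ))) t)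
    (hu : DifferentiableAt ℝ (fun x => u (t, x)) (Q (t, s))) :
    HasDerivAt (fun τ => deriv (fun σ => Q (τ, σ)) s)
      (fderiv ℝ (fun x => u (t, x)) (Q (t, s)) (deriv (fun σ => Q (t, σ)) s)) t := by
  apply hQsmooth.hasDerivAt_partial_comm
  simp only [fun σ => (hQ σ).deriv]
  have hQs : DifferentiableAt ℝ (fun σ => Q (t, σ)) s :=
    (hQsmooth.differentiable (by norm_num) (t, s)).hasDerivAt_partial_snd.differentiableAt
  exact hu.hasFDerivAt.comp_hasDerivAt s hQs.hasDerivAt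

end MixedPartials

section AdjointPairing

variable {F : Type*} [NormedAddCommGroup F] [InnerProductSpace ℝ F] [CompleteSpace F]

theorem hasDerivAt_inner_of_adjoint {p v : ℝ → F} {A : F →L[ℝ] F} {t : ℝ}
    (hp : HasDerivAt p (-(ContinuousLinearMap.adjoint A) (p t)) t)
    (hv : HasDerivAt v (A (v t)) t) :
    HasDerivAt (fun τ => ⟪p τ, v τ⟫) 0 t := by
  have h := hp.inner ℝ hv
  rwa [inner_neg_left, ContinuousLinearMap.adjoint_inner_left, add_neg_cancel] at h

theorem inner_eq_of_adjoint_flow {p v : ℝ → F} {A : ℝ → F →L[ℝ] F}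
    (hp : ∀ t, HasDerivAt p (-(ContinuousLinearMap.adjoint (A t)) (p t)) t)
    (hv : ∀ t, HasDerivAt v (A t (v t)) t) (t₁ t₂ : ℝ) :
    ⟪p t₁, v t₁⟫ = ⟪p t₂, v t₂⟫ :=
  have hpair := fun t => hasDerivAt_inner_of_adjoint (hp t) (hv t)
  is_const_of_deriv_eq_zero (fun t => (hpair t).differentiableAt) (fun t => (hpair t).deriv)
    t₁ t₂

end AdjointPairing

/-- For a curve `Q(t,s)` embedded in the flow of a `C¹` time-dependent vector
field `u` (so `∂Q/∂t = u(t, Q)`), with momentum satisfying the adjoint equation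
`∂P/∂t = −(D_x u(t, Q))ᵀ P`: if the momentum is initially normal to the curve,
`P(0,s) · ∂Q/∂s(0,s) = 0` for every `s`, then it is normal for all times:
`P(t,s) · ∂Q/∂s(t,s) = 0` for all `t` and `s`. -/
theorem momentum_normal_to_curve_for_all_time
    (u : ℝ × EuclideanSpace ℝ (Fin 2) → EuclideanSpace ℝ (Fin 2))
    (hu : ContDiff ℝ 1 u)
    (Q : ℝ × ℝ → EuclideanSpace ℝ (Fin 2))
    (hQsmooth : ContDiff ℝ 2 Q)
    (P : ℝ × ℝ → EuclideanSpace ℝ (Fin 2))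
    (hQ : ∀ (t s : ℝ),
      HasDerivAt (fun τ => Q (τ, s)) (u (t, Q (t, s))) t)
    (hP : ∀ (t s : ℝ),
      HasDerivAt (fun τ => P (τ, s))
        (-(ContinuousLinearMap.adjoint
            (fderiv ℝ (fun x => u (t, x)) (Q (t, s)))) (P (t, s))) t)
    (h0 : ∀ s : ℝ, ⟪P (0, s), deriv (fun σ => Q (0, σ)) s⟫ = 0) :
    ∀ (t s : ℝ), ⟪P (t, s), deriv (fun σ => Q (t, σ)) s⟫ = 0 := by
  intro t s
  have hux : ∀ τ, DifferentiableAt ℝ (fun x => u (τ, x)) (Q (τ, s)) := fun τ =>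
    (hu.differentiable one_ne_zero _).comp _
      ((differentiableAt_const τ).prodMk differentiableAt_id)
  have htangent := fun τ => hasDerivAt_partial_snd_of_flow hQsmooth (hQ τ) (hux τ)
  rw [← h0 s]
  exact inner_eq_of_adjoint_flow (hP · s) htangent t 0
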